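/- Let L = R·p₁ (an isotropic line of (V,Ω)) and let 𝔭₂ = {X ∈ sp(V) : X(L) ⊆ L} be its stabilizer. Then a Lie subalgebra h ⊆ 𝔭₂ has finite type if and only if the ideal h̃ = {X ∈ h : X(p₁) = 0} of h has finite type. -/

import Mathlib

open Module

attribute [local instance 100] LieRing.ofAssociativeRing
attribute [local instance 100] LieAlgebra.ofAssociativeAlgebra

abbrev V4 : Type := Fin 4 → ℝ

noncomputable section

def Om (u v : V4) : ℝ :=
  -(u 0 * v 2 - u 2 * v 0) - (u 1 * v 3 - u 3 * v 1)

def sp4 : Set (Module.End ℝ V4) :=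
  {X | ∀ u v : V4, Om (X u) v + Om u (X v) = 0}

def pp1 : V4 := ![1,0,0,0]
def pp2 : V4 := ![0,1,0,0]
def qq1 : V4 := ![0,0,1,0]
def qq2 : V4 := ![0,0,0,1]

lemma Om_add_left (a b v : V4) : Om (a + b) v = Om a v + Om b v := by
  simp [Om]; ring
lemma Om_smul_left (c : ℝ) (a v : V4) : Om (c • a) v = c * Om a v := by
  simp [Om]; ring
lemma Om_add_right (u a b : V4) : Om u (a + b) = Om u a + Om u b := by
  simp [Om]; ring
lemma Om_smul_right (c : ℝ) (u a : V4) : Om u (c • a) = c * Om u a := by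
  simp [Om]; ring

def quad (u v : V4) : Module.End ℝ V4 where
  toFun w := Om u w • v + Om v w • u
  map_add' a b := by
    try simp only []
    rw [Om_add_right, Om_add_right, add_smul, add_smul]; abel
  map_smul' c a := by
    try simp only []
    rw [Om_smul_right, Om_smul_right, RingHom.id_apply, mul_smul, mul_smul, smul_add]

def InProl (h : Set (Module.End ℝ V4)) (k : ℕ)
    (T : MultilinearMap ℝ (fun _ : Fin (k+1) => V4) V4) : Prop :=
  (∀ (σ : Equiv.Perm (Fin (k+1))) (v : Fin (k+1) → V4), (T fun i => v (σ i)) = T v) ∧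
  (∀ v : Fin k → V4, ∃ A ∈ h, ∀ w : V4, A w = T (Fin.snoc v w))

def FiniteType (h : Set (Module.End ℝ V4)) : Prop :=
  ∃ k : ℕ, 1 ≤ k ∧
    ∀ T : MultilinearMap ℝ (fun _ : Fin (k+1) => V4) V4, InProl h k T → T = 0

/-- The isotropic line `L = ℝ·p₁`. -/
def Lline : Submodule ℝ V4 := Submodule.span ℝ {pp1}

/-- The maximal parabolic `𝔭₂ = {X ∈ sp(V) : X(L) ⊆ L}`. -/
def par2 : Set (Module.End ℝ V4) := {X ∈ sp4 | ∀ w ∈ Lline, X w ∈ Lline}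

/-!
Every element of `h ⊆ 𝔭₂` maps `p₁` into `L`, and `h̃` is cut out of `h` by the condition
`X p₁ = 0`; since `h̃ ⊆ h`, finite type passes from `h` to `h̃`. Conversely let `T ∈ h^(k+1)`.
Its values `T(…, p₁)` lie in `L`, and `T(p₁, …, p₁) = 0`: pairing with `q₁` and using that
the slices of `T` are symplectic and that `T` is symmetric,
`Ω(T(p₁, u, p₁), q₁) = Ω(T(p₁, u, q₁), p₁) = Ω(T(q₁, u, p₁), p₁) = 0` because `L` is isotropic.
Hence `T(p₁, …) ∈ h̃^(k)` vanishes, then by symmetry `T(x, …, p₁) = 0` for every `x`, so every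
`T(x, …)` lies in `h̃^(k)` and vanishes as well. Thus `h̃^(k) = 0` forces `h^(k+1) = 0`.
-/

lemma Om_apply_comm_of_mem_sp4 {A : Module.End ℝ V4} (hA : A ∈ sp4) (a b : V4) :
    Om (A a) b = Om (A b) a := by
  have hab := hA a b
  have hanti : Om a (A b) = -Om (A b) a := by simp only [Om]; ring
  linarith

lemma Om_smul_pp1_pp1 (c : ℝ) : Om (c • pp1) pp1 = 0 := by simp [Om, pp1]

lemma Om_smul_pp1_qq1 (c : ℝ) : Om (c • pp1) qq1 = -c := by simp [Om, pp1, qq1]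

lemma comp_swap_zero_last_snoc_cons {α : Type*} {n : ℕ} (u : Fin n → α) (x y : α) :
    (fun i => (Fin.snoc (Fin.cons x u) y : Fin (n+2) → α) (Equiv.swap 0 (Fin.last (n+1)) i))
      = Fin.snoc (Fin.cons y u) x := by
  funext i
  refine Fin.lastCases ?_ (fun j => ?_) i
  · rw [Equiv.swap_apply_right, Fin.snoc_last]
    show (Fin.snoc (Fin.cons x u) y : Fin (n+2) → α) (Fin.castSucc 0) = x
    rw [Fin.snoc_castSucc, Fin.cons_zero]
  · refine Fin.cases ?_ (fun j' => ?_) j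
    · rw [Fin.castSucc_zero, Equiv.swap_apply_left, Fin.snoc_last]
      show y = (Fin.snoc (Fin.cons y u) x : Fin (n+2) → α) (Fin.castSucc 0)
      rw [Fin.snoc_castSucc, Fin.cons_zero]
    · have h0 : Fin.castSucc (Fin.succ j') ≠ (0 : Fin (n+2)) := by simp [Fin.ext_iff]
      have hlast : Fin.castSucc (Fin.succ j') ≠ Fin.last (n+1) :=
        Fin.ne_of_lt (Fin.castSucc_lt_last _)
      rw [Equiv.swap_apply_of_ne_of_ne h0 hlast, Fin.snoc_castSucc, Fin.snoc_castSucc,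
        Fin.cons_succ, Fin.cons_succ]

lemma cons_comp_decomposeFin_symm {α : Type*} {n : ℕ} (σ : Equiv.Perm (Fin n)) (x : α)
    (v : Fin n → α) :
    (fun i => (Fin.cons x v : Fin (n+1) → α) (Equiv.Perm.decomposeFin.symm (0, σ) i))
      = Fin.cons x (fun i => v (σ i)) := by
  funext i
  refine Fin.cases ?_ (fun j => ?_) i
  · rw [Equiv.Perm.decomposeFin_symm_apply_zero, Fin.cons_zero, Fin.cons_zero]
  · rw [Equiv.Perm.decomposeFin_symm_apply_succ, Equiv.swap_self]
    show (Fin.cons x v : Fin (n+1) → α) (Fin.succ (σ j)) = _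
    rw [Fin.cons_succ, Fin.cons_succ]

section Prolongation

variable {h : Set (Module.End ℝ V4)} {k : ℕ}

lemma InProl.mono {s : Set (Module.End ℝ V4)} {T : MultilinearMap ℝ (fun _ : Fin (k+1) => V4) V4}
    (hsh : s ⊆ h) (hT : InProl s k T) : InProl h k T := by
  refine ⟨hT.1, fun v => ?_⟩
  obtain ⟨A, hA, hAT⟩ := hT.2 v
  exact ⟨A, hsh hA, hAT⟩

lemma FiniteType.mono {s : Set (Module.End ℝ V4)} (hsh : s ⊆ h) (hh : FiniteType h) :
    FiniteType s := by
  obtain ⟨k, hk, hzero⟩ := hh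
  exact ⟨k, hk, fun T hT => hzero T (hT.mono hsh)⟩

lemma inProl_sep_apply_eq_zero_iff (e : V4) (S : MultilinearMap ℝ (fun _ : Fin (k+1) => V4) V4) :
    InProl {X ∈ h | X e = 0} k S ↔ InProl h k S ∧ ∀ v, S (Fin.snoc v e) = 0 := by
  refine ⟨fun hS => ⟨hS.mono (Set.sep_subset _ _), fun v => ?_⟩, fun ⟨hS, he⟩ => ⟨hS.1, ?_⟩⟩
  · obtain ⟨A, hA, hAS⟩ := hS.2 v
    rw [← hAS, hA.2]
  · intro v
    obtain ⟨A, hA, hAS⟩ := hS.2 v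
    exact ⟨A, ⟨hA, by rw [hAS, he]⟩, hAS⟩

variable {T : MultilinearMap ℝ (fun _ : Fin (k+2) => V4) V4}

lemma InProl.apply_snoc_cons_comm (hT : InProl h (k+1) T) (x : V4) (u : Fin k → V4) (y : V4) :
    T (Fin.snoc (Fin.cons x u) y) = T (Fin.snoc (Fin.cons y u) x) := by
  rw [← hT.1 (Equiv.swap 0 (Fin.last (k+1))), comp_swap_zero_last_snoc_cons]

lemma InProl.curryLeft (hT : InProl h (k+1) T) (x : V4) : InProl h k (T.curryLeft x) := by
  refine ⟨fun σ v => ?_, fun u => ?_⟩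
  · simpa only [MultilinearMap.curryLeft_apply, cons_comp_decomposeFin_symm] using
      hT.1 (Equiv.Perm.decomposeFin.symm (0, σ)) (Fin.cons x v)
  · obtain ⟨A, hA, hAT⟩ := hT.2 (Fin.cons x u)
    refine ⟨A, hA, fun w => ?_⟩
    rw [MultilinearMap.curryLeft_apply, Fin.cons_snoc_eq_snoc_cons]
    exact hAT w

end Prolongation

section Parabolic

variable {h : Set (Module.End ℝ V4)} (hpar : h ⊆ par2) {k : ℕ}
include hpar

lemma InProl.exists_apply_snoc_pp1_eq_smul {T : MultilinearMap ℝ (fun _ : Fin (k+1) => V4) V4}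
    (hT : InProl h k T) (v : Fin k → V4) : ∃ c : ℝ, c • pp1 = T (Fin.snoc v pp1) := by
  obtain ⟨A, hA, hAT⟩ := hT.2 v
  rw [← hAT, ← Submodule.mem_span_singleton]
  exact (hpar hA).2 pp1 (Submodule.mem_span_singleton_self _)

lemma InProl.apply_snoc_cons_pp1_pp1 {T : MultilinearMap ℝ (fun _ : Fin (k+2) => V4) V4}
    (hT : InProl h (k+1) T) (u : Fin k → V4) : T (Fin.snoc (Fin.cons pp1 u) pp1) = 0 := by
  obtain ⟨c, hc⟩ := hT.exists_apply_snoc_pp1_eq_smul hpar (Fin.cons pp1 u)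
  obtain ⟨d, hd⟩ := hT.exists_apply_snoc_pp1_eq_smul hpar (Fin.cons qq1 u)
  obtain ⟨A, hA, hAT⟩ := hT.2 (Fin.cons pp1 u)
  have hpair : Om (T (Fin.snoc (Fin.cons pp1 u) pp1)) qq1 = 0 := by
    calc Om (T (Fin.snoc (Fin.cons pp1 u) pp1)) qq1
        = Om (T (Fin.snoc (Fin.cons pp1 u) qq1)) pp1 := by
          rw [← hAT, ← hAT]; exact Om_apply_comm_of_mem_sp4 (hpar hA).1 pp1 qq1
      _ = Om (T (Fin.snoc (Fin.cons qq1 u) pp1)) pp1 := by rw [hT.apply_snoc_cons_comm]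
      _ = 0 := by rw [← hd, Om_smul_pp1_pp1]
  rw [← hc, Om_smul_pp1_qq1, neg_eq_zero] at hpair
  rw [← hc, hpair, zero_smul]

lemma InProl.eq_zero_of_sep_apply_pp1_eq_zero
    (hker : ∀ S : MultilinearMap ℝ (fun _ : Fin (k+1) => V4) V4,
      InProl {X ∈ h | X pp1 = 0} k S → S = 0)
    {T : MultilinearMap ℝ (fun _ : Fin (k+2) => V4) V4} (hT : InProl h (k+1) T) : T = 0 := by
  have hcurry : ∀ x, (∀ u, T (Fin.snoc (Fin.cons x u) pp1) = 0) → T.curryLeft x = 0 :=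
    fun x hx => hker _ <| (inProl_sep_apply_eq_zero_iff pp1 _).2
      ⟨hT.curryLeft x, fun u => by
        rw [MultilinearMap.curryLeft_apply, Fin.cons_snoc_eq_snoc_cons]; exact hx u⟩
  have hpp1 : T.curryLeft pp1 = 0 := hcurry pp1 (hT.apply_snoc_cons_pp1_pp1 hpar)
  have hall : ∀ x, T.curryLeft x = 0 := fun x => hcurry x fun u => by
    rw [hT.apply_snoc_cons_comm, ← Fin.cons_snoc_eq_snoc_cons, ← MultilinearMap.curryLeft_apply,
      hpp1, zero_apply]
  refine MultilinearMap.ext fun v => ?_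
  rw [← Fin.cons_self_tail v, ← MultilinearMap.curryLeft_apply, hall, zero_apply,
    zero_apply]

end Parabolic

/-- a subalgebra `h ⊆ 𝔭₂` has finite type iff the ideal
`h̃ = {X ∈ h : X(p₁) = 0}` has finite type. -/
theorem finite_type_in_par2_iff
    (h : LieSubalgebra ℝ (Module.End ℝ V4))
    (hsub : (h : Set (Module.End ℝ V4)) ⊆ par2) :
    FiniteType (h : Set (Module.End ℝ V4)) ↔
      FiniteType {X ∈ (h : Set (Module.End ℝ V4)) | X pp1 = 0} := by
  refine ⟨FiniteType.mono (Set.sep_subset _ _), ?_⟩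
  rintro ⟨k, hk, hker⟩
  exact ⟨k + 1, by omega, fun T hT => hT.eq_zero_of_sep_apply_pp1_eq_zero hsub hker⟩
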